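/- Γ-termination theorem: let P be a Γ-extended program. If every infinite call sequence P = e₀ → e₁, G₁ → e₂, G₂ → … in the approximate extended semantics for P is such that the multipath G₁, G₂, … has a thread of infinite descent, then P is Γ-terminating, i.e., for all pure λ-expressions t₁,…,t_k with Aᵢ ⇒*_Γ tᵢ (where A₁,…,A_k are the nonterminal occurrences of P), the pure program P[t₁/A₁,…,t_k/A_k] terminates under call-by-value evaluation: P[t₁/A₁,…,t_k/A_k]:[] ⇓ v for some value v. -/

import Mathlib

/- Pure untyped λ-expressions. -/
inductive Exp : Type
  | var : String → Exp
  | app : Exp → Exp → Exp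
  | lam : String → Exp → Exp
deriving DecidableEq

namespace Exp
/-- Free variables of a pure λ-expression. -/
def fv : Exp → Finset String
  | var x => {x}
  | app e1 e2 => fv e1 ∪ fv e2
  | lam x e => fv e \ {x}
end Exp

/- Γ-extended λ-expressions: variables, nonterminals, applications and
abstractions. -/
inductive ExpE : Type
  | var : String → ExpE
  | app : ExpE → ExpE → ExpE
  | lam : String → ExpE → ExpE
  | nt : String → ExpE
deriving DecidableEq

/-- A λ-regular grammar `Γ = (N, Π)`: a finite set of nonterminals and a
finite set of productions `A ::= e`; we assume (as in the paper) that no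
production has the form `A ::= A'` with `A'` a nonterminal. -/
structure Grammar where
  N : Set String
  prods : Set (String × ExpE)
  finN : N.Finite
  finProds : prods.Finite
  prods_mem : ∀ p ∈ prods, p.1 ∈ N
  no_nt_prod : ∀ p ∈ prods, ∀ A : String, p.2 ≠ ExpE.nt A

/-- The derivation relation `e ⇒*_Γ t`, relating Γ-extended expressions to the
pure λ-expressions obtained by replacing every nonterminal occurrence
(independently) by a λ-expression it derives via the productions. -/
inductive Deriv (Γ : Grammar) : ExpE → Exp → Prop
  | var (x : String) : Deriv Γ (ExpE.var x) (Exp.var x)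
  | app {a1 a2 : ExpE} {t1 t2 : Exp} :
      Deriv Γ a1 t1 → Deriv Γ a2 t2 → Deriv Γ (ExpE.app a1 a2) (Exp.app t1 t2)
  | lam {x : String} {a : ExpE} {t : Exp} :
      Deriv Γ a t → Deriv Γ (ExpE.lam x a) (Exp.lam x t)
  | nt {A : String} {e : ExpE} {t : Exp} :
      (A, e) ∈ Γ.prods → Deriv Γ e t → Deriv Γ (ExpE.nt A) t

/-- Free variables of a Γ-extended expression:
`fv(e) = { x | ∃t, e ⇒*_Γ t and x ∈ fv(t) }`. -/
def fvE (Γ : Grammar) (e : ExpE) : Set String :=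
  {x | ∃ t, Deriv Γ e t ∧ x ∈ Exp.fv t}
/- Values (closures), environments and states of the (pure)
environment-based semantics. -/
inductive Val : Type
  | clos : String → Exp → (String → Option Val) → Val

abbrev Env := String → Option Val
abbrev State := Exp × Env

/-- A value `λx.e:ρ` viewed as a state. -/
def Val.toState : Val → State
  | .clos x e ρ => (Exp.lam x e, ρ)

/-- The λ-expression component of a value. -/
def Val.toExp : Val → Exp
  | .clos x e _ => Exp.lam x e

def Env.update (ρ : Env) (x : String) (v : Val) : Env :=
  fun y => if y = x then some v else ρ y

def Env.empty : Env := fun _ => none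
/-- Arc labels: `=` (eq) and `↓` (dec). -/
inductive Lab : Type
  | eq : Lab
  | dec : Lab
deriving DecidableEq

/-- Name paths; here the nodes of generated size-change graphs are `ε = []`
or single variables `[y]`. -/
abbrev NP := List String
abbrev Arc := NP × Lab × NP
abbrev ArcSet := Set Arc

/-- `id= = {ε =→ ε} ∪ {y =→ y | y ∈ s}`. -/
def idEqS (s : Set String) : ArcSet :=
  {a | a = ([], Lab.eq, []) ∨ ∃ y ∈ s, a = ([y], Lab.eq, [y])}

/-- `id↓ = {ε ↓→ ε} ∪ {y =→ y | y ∈ s}`. -/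
def idDecS (s : Set String) : ArcSet :=
  {a | a = ([], Lab.dec, []) ∨ ∃ y ∈ s, a = ([y], Lab.eq, [y])}

/-- The graph `{x =→ ε} ∪ {x ↓→ y | y ∈ s}` of the variable rule. -/
def varGraphS (x : String) (s : Set String) : ArcSet :=
  {a | a = ([x], Lab.eq, []) ∨ ∃ y ∈ s, a = ([x], Lab.dec, [y])}

/-- `G₁^{-ε/λx.e₀}`: keep arcs between variables, replace `ε r→ z` (`z` a
variable) by `ε ↓→ z`, and, when `x ∉ fv(e₀)`, additionally replace each
arc `p r→ ε` by `p ↓→ ε`.  (`fve0` is `fv(e₀)`.) -/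
def GminusS (x : String) (fve0 : Set String) (G1 : ArcSet) : ArcSet :=
  {a | (∃ (y : String) (r : Lab) (z : String), a = ([y], r, [z]) ∧ ([y], r, [z]) ∈ G1) ∨
       (∃ z : String, a = (([] : NP), Lab.dec, [z]) ∧ ∃ r, (([] : NP), r, [z]) ∈ G1) ∨
       (x ∉ fve0 ∧ ∃ p : NP, a = (p, Lab.dec, ([] : NP)) ∧ ∃ r, (p, r, ([] : NP)) ∈ G1)}

/-- `G₂^{ε↦x}`: `y r→ x` for each `y r→ ε ∈ G₂`, and `ε ↓→ x` for each
`ε r→ ε ∈ G₂`. -/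
def GepsS (x : String) (G2 : ArcSet) : ArcSet :=
  {a | (∃ (y : String) (r : Lab), a = ([y], r, [x]) ∧ ([y], r, ([] : NP)) ∈ G2) ∨
       (a = (([] : NP), Lab.dec, [x]) ∧ ∃ r, (([] : NP), r, ([] : NP)) ∈ G2)}

/-- `∪_{e₀}`: union restricted to arcs whose target is in `fv(e₀) ∪ {ε}`. -/
def unionRS (fve0 : Set String) (A B : ArcSet) : ArcSet :=
  {a | a ∈ A ∪ B ∧ (a.2.2 = ([] : NP) ∨ ∃ y ∈ fve0, a.2.2 = [y])}

/-- The label set `R(x,z)` used in graph composition. -/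
def labelsA (G1 G2 : ArcSet) (x z : NP) : Set Lab :=
  {r | ∃ y s, ((x, r, y) ∈ G1 ∧ (y, s, z) ∈ G2) ∨
              ((x, s, y) ∈ G1 ∧ (y, r, z) ∈ G2)}

/-- Composition `G₁;G₂` of size-change graphs (as arc sets): `x ↓→ z` whenever
`↓ ∈ R(x,z)`, and `x =→ z` whenever `R(x,z) = {=}`. -/
def compA (G1 G2 : ArcSet) : ArcSet :=
  {a | (∃ x z, a = (x, Lab.dec, z) ∧ Lab.dec ∈ labelsA G1 G2 x z) ∨
       (∃ x z, a = (x, Lab.eq, z) ∧ labelsA G1 G2 x z = {Lab.eq})}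
/-- `SubE Γ e t` means `t ∈ subexps(e)`: subexpressions of a Γ-extended
expression, looking through productions at nonterminals. -/
inductive SubE (Γ : Grammar) : ExpE → ExpE → Prop
  | refl (e : ExpE) : SubE Γ e e
  | lam {x : String} {e t : ExpE} : SubE Γ e t → SubE Γ (ExpE.lam x e) t
  | appL {e1 e2 t : ExpE} : SubE Γ e1 t → SubE Γ (ExpE.app e1 e2) t
  | appR {e1 e2 t : ExpE} : SubE Γ e2 t → SubE Γ (ExpE.app e1 e2) t
  | nt {A : String} {e t : ExpE} :
      (A, e) ∈ Γ.prods → SubE Γ e t → SubE Γ (ExpE.nt A) t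
/- The approximate extended semantics with size-change graphs (environments
removed), for a fixed Γ-extended program `P`. -/
inductive CallAXn (Γ : Grammar) : ExpE → ExpE → ArcSet → Prop
  | gram {A : String} {e : ExpE} :
      (A, e) ∈ Γ.prods → CallAXn Γ (ExpE.nt A) e (idEqS (fvE Γ e))

mutual
  inductive EvalAX (Γ : Grammar) (P : ExpE) : ExpE → ExpE → ArcSet → Prop
    | value (x : String) (e : ExpE) :
        EvalAX Γ P (ExpE.lam x e) (ExpE.lam x e) (idEqS (fvE Γ (ExpE.lam x e)))
    | var {e1 e2 : ExpE} {x : String} {e0 v2 : ExpE} {G1 G2 : ArcSet} :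
        SubE Γ P (ExpE.app e1 e2) →
        EvalAX Γ P e1 (ExpE.lam x e0) G1 → EvalAX Γ P e2 v2 G2 →
        EvalAX Γ P (ExpE.var x) v2 (varGraphS x (fvE Γ v2))
    | resultC {a e' v : ExpE} {G' G : ArcSet} :
        CallAXc Γ P a e' G' → EvalAX Γ P e' v G → EvalAX Γ P a v (compA G' G)
    | resultN {a e' v : ExpE} {G' G : ArcSet} :
        CallAXn Γ a e' G' → EvalAX Γ P e' v G → EvalAX Γ P a v (compA G' G)
  inductive CallAXc (Γ : Grammar) (P : ExpE) : ExpE → ExpE → ArcSet → Prop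
    | call {e1 e2 : ExpE} {x : String} {e0 v2 : ExpE} {G1 G2 : ArcSet} :
        EvalAX Γ P e1 (ExpE.lam x e0) G1 → EvalAX Γ P e2 v2 G2 →
        CallAXc Γ P (ExpE.app e1 e2) e0
          (unionRS (fvE Γ e0) (GminusS x (fvE Γ e0) G1) (GepsS x G2))
end

inductive CallAXr (Γ : Grammar) : ExpE → ExpE → ArcSet → Prop
  | oper (e1 e2 : ExpE) : CallAXr Γ (ExpE.app e1 e2) e1 (idDecS (fvE Γ e1))

inductive CallAXd (Γ : Grammar) : ExpE → ExpE → ArcSet → Prop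
  | opnd (e1 e2 : ExpE) : CallAXd Γ (ExpE.app e1 e2) e2 (idDecS (fvE Γ e2))

/-- The approximate extended call relation `→ = →r ∪ →d ∪ →c ∪ →n`. -/
def CallAXAny (Γ : Grammar) (P : ExpE) (e e' : ExpE) (G : ArcSet) : Prop :=
  CallAXr Γ e e' G ∨ CallAXd Γ e e' G ∨ CallAXc Γ P e e' G ∨ CallAXn Γ e e' G

/- Environment-based evaluation `s ⇓ v` of pure λ-expressions, with the
three-premise (Apply) rule. -/
inductive EvalE : State → Val → Prop
  | value (x : String) (e : Exp) (ρ : Env) :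
      EvalE (Exp.lam x e, ρ) (Val.clos x e ρ)
  | var {ρ : Env} {x : String} {v : Val} :
      ρ x = some v → EvalE (Exp.var x, ρ) v
  | apply {e1 e2 : Exp} {ρ ρ0 : Env} {x : String} {e0 : Exp} {v2 v : Val} :
      EvalE (e1, ρ) (Val.clos x e0 ρ0) → EvalE (e2, ρ) v2 →
      EvalE (e0, Env.update ρ0 x v2) v →
      EvalE (Exp.app e1 e2, ρ) v
/-!
If an instance `Q` of `P` diverged, we could follow its evaluation inside the approximate
semantics. States are weighed by the well-founded rank of the closures nested in their
environments, refined lexicographically by term size; a variable node weighs the closure it is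
bound to. Every pure evaluation `s ⇓ w` whose term is derived from a subexpression of `P`, and
whose environment only binds values produced by approximate calls of `P`, is mirrored by an
approximate evaluation whose size-change graph is sound for these weights: `=`-arcs do not
increase the weight and `↓`-arcs strictly decrease it. A diverging state of this kind always makes
such a call to another diverging one, so divergence of `Q` yields an infinite call sequence from
`P` with sound graphs, and its thread of infinite descent would be an infinite descending chain
of weights.
-/

theorem SubE.trans {Γ : Grammar} {a b c : ExpE} (h₁ : SubE Γ a b) (h₂ : SubE Γ b c) :
    SubE Γ a c := by
  induction h₁ with
  | refl => exact h₂
  | lam _ ih => exact .lam (ih h₂)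
  | appL _ ih => exact .appL (ih h₂)
  | appR _ ih => exact .appR (ih h₂)
  | nt hp _ ih => exact .nt hp (ih h₂)

theorem not_mem_fvE_lam (Γ : Grammar) (x : String) (e : ExpE) : x ∉ fvE Γ (.lam x e) := by
  rintro ⟨t, hd, hx⟩
  cases hd
  simp [Exp.fv] at hx

theorem Env.update_self (ρ : Env) (x : String) (v : Val) : ρ.update x v x = some v :=
  if_pos rfl

theorem Env.update_of_ne {ρ : Env} {x y : String} (v : Val) (h : y ≠ x) :
    ρ.update x v y = ρ y :=
  if_neg h

theorem Exp.mem_fv_lam {x y : String} {t : Exp} (hy : y ∈ Exp.fv t) (hyx : y ≠ x) :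
    y ∈ Exp.fv (.lam x t) := by
  simp [Exp.fv, hy, hyx]

def Lab.Rel {α : Type*} [Preorder α] : Lab → α → α → Prop
  | .eq, a, b => a ≤ b
  | .dec, a, b => a < b

section Rel

variable {α : Type*} [Preorder α] {r : Lab} {a b c : α}

theorem Lab.Rel.le (h : r.Rel a b) : a ≤ b := by
  cases r
  exacts [h, le_of_lt h]

theorem Lab.Rel.trans_le (h : r.Rel a b) (hbc : b ≤ c) : r.Rel a c := by
  cases r
  exacts [le_trans h hbc, lt_of_lt_of_le h hbc]

theorem Lab.Rel.le_trans (hab : a ≤ b) (h : r.Rel b c) : r.Rel a c := by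
  cases r
  exacts [_root_.le_trans hab h, lt_of_le_of_lt hab h]

end Rel

namespace GammaTermination

def Supports (s' s : State) : Prop :=
  ∃ y ∈ Exp.fv s.1, ∃ w : Val, s.2 y = some w ∧ w.toState = s'

theorem acc_supports_toState (v : Val) : Acc Supports v.toState :=
  Val.rec (motive_1 := fun v => Acc Supports v.toState)
    (motive_2 := fun o => ∀ w, o = some w → Acc Supports w.toState)
    (fun _ _ _ ih => ⟨_, fun _ ⟨y, _, w, hw, hs⟩ => hs ▸ ih y w hw⟩)
    (fun _ h => by cases h)
    (fun _ ih _ h => by cases h; exact ih) v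

instance : IsWellFounded State Supports :=
  ⟨⟨fun s => ⟨s, fun _ ⟨_, _, w, _, hs⟩ => hs ▸ acc_supports_toState w⟩⟩⟩

noncomputable def rank (s : State) : Ordinal := IsWellFounded.rank Supports s

theorem rank_lt_of_supports {s' s : State} (h : Supports s' s) : rank s' < rank s :=
  IsWellFounded.rank_lt_of_rel h

theorem rank_le_of_supports_imp {s' s : State} (h : ∀ s'', Supports s'' s' → Supports s'' s) :
    rank s' ≤ rank s := by
  rw [rank, IsWellFounded.rank_eq]
  exact Ordinal.iSup_le fun ⟨s'', hs''⟩ => Order.succ_le_of_lt (rank_lt_of_supports (h s'' hs''))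

abbrev Weight := Ordinal ×ₗ ℕ

/-- The size component makes a state heavier than the states of its proper subterms. -/
noncomputable def stateWeight (s : State) : Weight := toLex (rank s, sizeOf s.1)

/-- Counting only free variables keeps every variable node strictly below `ε`. -/
noncomputable def weight (s : State) : NP → Weight
  | [] => stateWeight s
  | [y] => if y ∈ Exp.fv s.1 then (s.2 y).elim ⊥ (fun w => stateWeight w.toState) else ⊥
  | _ :: _ :: _ => ⊥

theorem bot_lt_stateWeight (s : State) : ⊥ < stateWeight s :=
  Prod.Lex.toLex_lt_toLex'.2 ⟨bot_le, fun _ => by cases s.1 <;> simp⟩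

theorem stateWeight_lt_of_supports {s' s : State} (h : Supports s' s) :
    stateWeight s' < stateWeight s :=
  Prod.Lex.toLex_lt_toLex.2 (Or.inl (rank_lt_of_supports h))

theorem stateWeight_lt_of_le_of_lt {s' s : State} (hr : rank s' ≤ rank s)
    (hsize : sizeOf s'.1 < sizeOf s.1) : stateWeight s' < stateWeight s :=
  Prod.Lex.toLex_strictMono (Prod.mk_lt_mk_of_le_of_lt hr hsize)

theorem weight_singleton_lt (s : State) (y : String) : weight s [y] < weight s [] := by
  by_cases hy : y ∈ Exp.fv s.1
  · cases hw : s.2 y with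
    | none => simpa [weight, hy, hw] using bot_lt_stateWeight s
    | some w => simpa [weight, hy, hw] using stateWeight_lt_of_supports ⟨y, hy, w, hw, rfl⟩
  · simpa [weight, hy] using bot_lt_stateWeight s

theorem stateWeight_lt_of_fv_subset {t' t : Exp} (ρ : Env) (hfv : Exp.fv t' ⊆ Exp.fv t)
    (hsize : sizeOf t' < sizeOf t) : stateWeight (t', ρ) < stateWeight (t, ρ) :=
  stateWeight_lt_of_le_of_lt
    (rank_le_of_supports_imp fun _ ⟨y, hy, w, hw, hs⟩ => ⟨y, hfv hy, w, hw, hs⟩) hsize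

theorem weight_le_of_fv_subset {t' t : Exp} (ρ : Env) (hfv : Exp.fv t' ⊆ Exp.fv t)
    (hsize : sizeOf t' < sizeOf t) : ∀ p, weight (t', ρ) p ≤ weight (t, ρ) p
  | [] => (stateWeight_lt_of_fv_subset ρ hfv hsize).le
  | [y] => by
    by_cases hy : y ∈ Exp.fv t'
    · simp [weight, hy, hfv hy]
    · simp [weight, hy]
  | _ :: _ :: _ => le_rfl

theorem stateWeight_app_left_lt (t₁ t₂ : Exp) (ρ : Env) :
    stateWeight (t₁, ρ) < stateWeight (.app t₁ t₂, ρ) :=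
  stateWeight_lt_of_fv_subset ρ (by simp [Exp.fv]) (by simp; omega)

theorem stateWeight_app_right_lt (t₁ t₂ : Exp) (ρ : Env) :
    stateWeight (t₂, ρ) < stateWeight (.app t₁ t₂, ρ) :=
  stateWeight_lt_of_fv_subset ρ (by simp [Exp.fv]) (by simp)

theorem weight_app_left_le (t₁ t₂ : Exp) (ρ : Env) :
    ∀ p, weight (t₁, ρ) p ≤ weight (.app t₁ t₂, ρ) p :=
  weight_le_of_fv_subset ρ (by simp [Exp.fv]) (by simp; omega)

theorem weight_app_right_le (t₁ t₂ : Exp) (ρ : Env) :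
    ∀ p, weight (t₂, ρ) p ≤ weight (.app t₁ t₂, ρ) p :=
  weight_le_of_fv_subset ρ (by simp [Exp.fv]) (by simp)

theorem stateWeight_body_lt {x : String} {t : Exp} (ρ : Env) (v : Val) (hx : x ∉ Exp.fv t) :
    stateWeight (t, ρ.update x v) < stateWeight (.lam x t, ρ) := by
  refine stateWeight_lt_of_le_of_lt (rank_le_of_supports_imp ?_) (by simp)
  rintro _ ⟨y, hy, w, hw, hs⟩
  have hyx : y ≠ x := fun h => hx (h ▸ hy)
  exact ⟨y, Exp.mem_fv_lam hy hyx, w, by simpa [Env.update_of_ne v hyx] using hw, hs⟩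

theorem weight_body_le {x z : String} {t : Exp} (ρ : Env) (v : Val) (hzx : z ≠ x) :
    weight (t, ρ.update x v) [z] ≤ weight (.lam x t, ρ) [z] := by
  by_cases hz : z ∈ Exp.fv t
  · simp [weight, hz, Exp.mem_fv_lam hz hzx, Env.update_of_ne v hzx]
  · simp [weight, hz]

theorem weight_body_bound_le {x : String} {t : Exp} (ρ : Env) (v : Val) :
    weight (t, ρ.update x v) [x] ≤ stateWeight v.toState := by
  by_cases hx : x ∈ Exp.fv t
  · simp [weight, hx, Env.update_self]
  · simp [weight, hx]

def Safe {α : Type*} [Preorder α] (G : ArcSet) (Vs Vt : NP → α) : Prop :=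
  ∀ p r q, (p, r, q) ∈ G → r.Rel (Vt q) (Vs p)

def VarTargetsIn (G : ArcSet) (S : Set String) : Prop :=
  ∀ p r z, (p, r, [z]) ∈ G → z ∈ S

theorem exists_path_of_mem_compA {G₁ G₂ : ArcSet} {p q : NP} {r : Lab}
    (h : (p, r, q) ∈ compA G₁ G₂) :
    ∃ m r₁ r₂, (p, r₁, m) ∈ G₁ ∧ (m, r₂, q) ∈ G₂ ∧ (r = .dec → r₁ = .dec ∨ r₂ = .dec) := by
  rcases h with ⟨x, z, ha, hlab⟩ | ⟨x, z, ha, hlab⟩ <;> simp only [Prod.mk.injEq] at ha <;>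
    obtain ⟨rfl, rfl, rfl⟩ := ha
  · obtain ⟨m, s, h | h⟩ := hlab
    exacts [⟨m, _, _, h.1, h.2, fun _ => Or.inl rfl⟩, ⟨m, _, _, h.1, h.2, fun _ => Or.inr rfl⟩]
  · obtain ⟨m, s, h | h⟩ : Lab.eq ∈ labelsA G₁ G₂ p q := hlab ▸ rfl
    exacts [⟨m, _, _, h.1, h.2, nofun⟩, ⟨m, _, _, h.1, h.2, nofun⟩]

section Safe

variable {α : Type*} [Preorder α] {G G₁ G₂ : ArcSet} {Vs Vm Vt Vs₁ Vt₁ : NP → α}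

theorem Safe.comp (h₁ : Safe G₁ Vs Vm) (h₂ : Safe G₂ Vm Vt) : Safe (compA G₁ G₂) Vs Vt := by
  intro p r q h
  obtain ⟨m, r₁, r₂, hm₁, hm₂, hdec⟩ := exists_path_of_mem_compA h
  have h₁ := h₁ _ _ _ hm₁
  have h₂ := h₂ _ _ _ hm₂
  cases r with
  | eq => exact h₂.le.trans h₁.le
  | dec =>
    rcases hdec rfl with rfl | rfl
    exacts [lt_of_le_of_lt h₂.le h₁, lt_of_lt_of_le h₂ h₁.le]

theorem Safe.unionRS {S : Set String} (h₁ : Safe G₁ Vs Vt) (h₂ : Safe G₂ Vs Vt) :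
    Safe (unionRS S G₁ G₂) Vs Vt :=
  fun p r q ⟨h, _⟩ => h.elim (h₁ p r q) (h₂ p r q)

theorem safe_idEqS {S : Set String} (h : ∀ p, Vt p ≤ Vs p) : Safe (idEqS S) Vs Vt := by
  rintro p r q (ha | ⟨y, -, ha⟩) <;> simp only [Prod.mk.injEq] at ha <;>
    obtain ⟨rfl, rfl, rfl⟩ := ha <;> exact h _

theorem safe_idDecS {S : Set String} (h : ∀ p, Vt p ≤ Vs p) (hε : Vt [] < Vs []) :
    Safe (idDecS S) Vs Vt := by
  rintro p r q (ha | ⟨y, -, ha⟩) <;> simp only [Prod.mk.injEq] at ha <;>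
    obtain ⟨rfl, rfl, rfl⟩ := ha
  exacts [hε, h _]

theorem safe_GminusS {x : String} {S fve₀ : Set String} (h₁ : Safe G₁ Vs₁ Vt₁)
    (htg : VarTargetsIn G₁ S) (hs : ∀ p, Vs₁ p ≤ Vs p) (hε : Vs₁ [] < Vs [])
    (ht : ∀ z ∈ S, Vt [z] ≤ Vt₁ [z]) (hbody : x ∉ fve₀ → Vt [] < Vt₁ []) :
    Safe (GminusS x fve₀ G₁) Vs Vt := by
  rintro p r q (⟨y, r₀, z, ha, hG⟩ | ⟨z, ha, r₀, hG⟩ | ⟨hx, p₀, ha, r₀, hG⟩) <;>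
    simp only [Prod.mk.injEq] at ha <;> obtain ⟨rfl, rfl, rfl⟩ := ha
  · exact ((h₁ _ _ _ hG).trans_le (hs _)).le_trans (ht z (htg _ _ _ hG))
  · exact lt_of_le_of_lt ((ht z (htg _ _ _ hG)).trans (h₁ _ _ _ hG).le) hε
  · exact lt_of_lt_of_le (hbody hx) ((h₁ _ _ _ hG).le.trans (hs _))

theorem safe_GepsS {x : String} {Vs₂ Vt₂ : NP → α} (h₂ : Safe G₂ Vs₂ Vt₂)
    (hs : ∀ p, Vs₂ p ≤ Vs p) (hε : Vs₂ [] < Vs []) (ht : Vt [x] ≤ Vt₂ []) :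
    Safe (GepsS x G₂) Vs Vt := by
  rintro p r q (⟨y, r₀, ha, hG⟩ | ⟨ha, r₀, hG⟩) <;>
    simp only [Prod.mk.injEq] at ha <;> obtain ⟨rfl, rfl, rfl⟩ := ha
  · exact ((h₂ _ _ _ hG).trans_le (hs _)).le_trans ht
  · exact lt_of_le_of_lt (ht.trans (h₂ _ _ _ hG).le) hε

theorem not_infinite_descent_of_safe [WellFoundedLT α] {V : ℕ → NP → α} {g : ℕ → ArcSet}
    (hs : ∀ k, Safe (g k) (V k) (V (k + 1))) {j : ℕ} {a : ℕ → NP} {r : ℕ → Lab}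
    (harc : ∀ k, j ≤ k → (a k, r k, a (k + 1)) ∈ g k)
    (hinf : ∀ N, ∃ k, N ≤ k ∧ j ≤ k ∧ r k = Lab.dec) : False := by
  set w : ℕ → α := fun k => V k (a k)
  have hrel : ∀ k, j ≤ k → (r k).Rel (w (k + 1)) (w k) := fun k hk => hs k _ _ _ (harc k hk)
  have hanti : ∀ k m, j ≤ k → k ≤ m → w m ≤ w k := fun k m hk hkm => by
    induction m, hkm using Nat.le_induction with
    | base => exact le_rfl
    | succ m hkm ih => exact (hrel m (hk.trans hkm)).le.trans ih
  obtain ⟨_, ⟨k₀, hk₀, rfl⟩, hmin⟩ :=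
    wellFounded_lt.has_min {o | ∃ k, j ≤ k ∧ w k = o} ⟨w j, j, le_rfl, rfl⟩
  obtain ⟨k, hk₀k, hjk, hdec⟩ := hinf k₀
  have hlt : w (k + 1) < w k := by simpa [hdec, Lab.Rel] using hrel k hjk
  exact hmin _ ⟨k + 1, by omega, rfl⟩ (hlt.trans_le (hanti k₀ k hk₀ hk₀k))

end Safe

theorem VarTargetsIn.comp {G₁ G₂ : ArcSet} {S : Set String} (h : VarTargetsIn G₂ S) :
    VarTargetsIn (compA G₁ G₂) S := fun _ _ _ hc =>
  let ⟨_, _, _, _, hm, _⟩ := exists_path_of_mem_compA hc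
  h _ _ _ hm

theorem varTargetsIn_idEqS (S : Set String) : VarTargetsIn (idEqS S) S := by
  rintro p r z (ha | ⟨y, hy, ha⟩) <;> simp only [Prod.mk.injEq] at ha
  · exact absurd ha.2.2 nofun
  · rw [List.singleton_inj.1 ha.2.2]
    exact hy

theorem varTargetsIn_varGraphS (x : String) (S : Set String) :
    VarTargetsIn (varGraphS x S) S := by
  rintro p r z (ha | ⟨y, hy, ha⟩) <;> simp only [Prod.mk.injEq] at ha
  · exact absurd ha.2.2 nofun
  · rw [List.singleton_inj.1 ha.2.2]
    exact hy

theorem safe_varGraphS {ρ : Env} {x : String} {v : Val} (hx : ρ x = some v) (S : Set String) :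
    Safe (varGraphS x S) (weight (.var x, ρ)) (weight v.toState) := by
  have hsrc : weight (.var x, ρ) [x] = stateWeight v.toState := by simp [weight, Exp.fv, hx]
  rintro p r q (ha | ⟨y, -, ha⟩) <;> simp only [Prod.mk.injEq] at ha <;>
    obtain ⟨rfl, rfl, rfl⟩ := ha <;> rw [hsrc]
  · exact le_rfl
  · exact weight_singleton_lt _ y

theorem safe_call {Γ : Grammar} {x : String} {ee₀ : ExpE} {t₀ t₁ t₂ : Exp} {ρ ρ₀ : Env}
    {v₂ : Val} {G₁ G₂ : ArcSet} (hd₀ : Deriv Γ ee₀ t₀)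
    (h₁ : Safe G₁ (weight (t₁, ρ)) (weight (.lam x t₀, ρ₀)))
    (htg₁ : VarTargetsIn G₁ (fvE Γ (.lam x ee₀)))
    (h₂ : Safe G₂ (weight (t₂, ρ)) (weight v₂.toState)) :
    Safe (unionRS (fvE Γ ee₀) (GminusS x (fvE Γ ee₀) G₁) (GepsS x G₂))
      (weight (.app t₁ t₂, ρ)) (weight (t₀, ρ₀.update x v₂)) := by
  refine Safe.unionRS
    (safe_GminusS h₁ htg₁ (weight_app_left_le t₁ t₂ ρ) (stateWeight_app_left_lt t₁ t₂ ρ)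
      (fun z hz => ?_) (fun hx => ?_))
    (safe_GepsS h₂ (weight_app_right_le t₁ t₂ ρ) (stateWeight_app_right_lt t₁ t₂ ρ)
      (weight_body_bound_le ρ₀ v₂))
  · exact weight_body_le ρ₀ v₂ fun hzx => not_mem_fvE_lam Γ x ee₀ (hzx ▸ hz)
  · exact stateWeight_body_lt ρ₀ v₂ fun hx' => hx ⟨t₀, hd₀, hx'⟩

mutual

/-- `TracedVal Γ P vh w`: the closure `w` is an instance of the approximate value `vh`, and
every binding of its environment arose from an approximate call inside `P`. -/
inductive TracedVal (Γ : Grammar) (P : ExpE) : ExpE → Val → Prop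
  | clos {x : String} {ee : ExpE} {t : Exp} {ρ : Env} :
      Deriv Γ ee t → SubE Γ P (.lam x ee) →
      (∀ y ∈ Exp.fv (.lam x t), TracedBinding Γ P y (ρ y)) →
      TracedVal Γ P (.lam x ee) (.clos x t ρ)

/-- Indexing by `Option Val` makes a traced binding also a defined one. -/
inductive TracedBinding (Γ : Grammar) (P : ExpE) : String → Option Val → Prop
  | mk {y : String} {e₁ e₂ e₀ vh : ExpE} {G₁ G₂ : ArcSet} {w : Val} :
      SubE Γ P (.app e₁ e₂) → EvalAX Γ P e₁ (.lam y e₀) G₁ → EvalAX Γ P e₂ vh G₂ →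
      TracedVal Γ P vh w → TracedBinding Γ P y (some w)

end

def TracedEnv (Γ : Grammar) (P : ExpE) (S : Finset String) (ρ : Env) : Prop :=
  ∀ y ∈ S, TracedBinding Γ P y (ρ y)

structure Tracks (Γ : Grammar) (P : ExpE) (ee : ExpE) (s : State) : Prop where
  deriv : Deriv Γ ee s.1
  sub : SubE Γ P ee
  env : TracedEnv Γ P (Exp.fv s.1) s.2

def Simulates (Γ : Grammar) (P : ExpE) (ee : ExpE) (s : State) (w : Val) : Prop :=
  ∃ vh G, EvalAX Γ P ee vh G ∧ TracedVal Γ P vh w ∧ Safe G (weight s) (weight w.toState) ∧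
    VarTargetsIn G (fvE Γ vh)

variable {Γ : Grammar} {P : ExpE}

theorem TracedEnv.mono {S S' : Finset String} {ρ : Env} (h : TracedEnv Γ P S ρ) (hS : S' ⊆ S) :
    TracedEnv Γ P S' ρ :=
  fun y hy => h y (hS hy)

theorem TracedEnv.update {x : String} {t : Exp} {ρ : Env} {v : Val}
    (h : TracedEnv Γ P (Exp.fv (.lam x t)) ρ) (hx : TracedBinding Γ P x (some v)) :
    TracedEnv Γ P (Exp.fv t) (ρ.update x v) := by
  intro y hy
  by_cases hyx : y = x
  · subst hyx
    rwa [Env.update_self]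
  · rw [Env.update_of_ne v hyx]
    exact h y (Exp.mem_fv_lam hy hyx)

theorem Tracks.app {ea₁ ea₂ : ExpE} {t₁ t₂ : Exp} {ρ : Env}
    (h : Tracks Γ P (.app ea₁ ea₂) (.app t₁ t₂, ρ)) :
    Tracks Γ P ea₁ (t₁, ρ) ∧ Tracks Γ P ea₂ (t₂, ρ) := by
  obtain ⟨hd, hsub, henv⟩ := h
  cases hd with
  | app hd₁ hd₂ =>
    exact ⟨⟨hd₁, hsub.trans (.appL (.refl _)), henv.mono (by simp [Exp.fv])⟩,
      ⟨hd₂, hsub.trans (.appR (.refl _)), henv.mono (by simp [Exp.fv])⟩⟩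

theorem Simulates.of_prod {A : String} {e : ExpE} {s : State} {w : Val}
    (hp : (A, e) ∈ Γ.prods) (h : Simulates Γ P e s w) : Simulates Γ P (.nt A) s w :=
  let ⟨vh, _, hax, htr, hs, htg⟩ := h
  ⟨vh, _, .resultN (.gram hp) hax, htr, (safe_idEqS fun _ => le_rfl).comp hs, htg.comp⟩

/-- Productions are never unit productions, so one unfolding of a leading nonterminal reaches
a variable, an application or an abstraction. -/
theorem Tracks.simulates_of_not_nt {ee : ExpE} {s : State} {w : Val} (h : Tracks Γ P ee s)
    (hbase : ∀ {ee'}, Tracks Γ P ee' s → (∀ A, ee' ≠ .nt A) → Simulates Γ P ee' s w) :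
    Simulates Γ P ee s w := by
  by_cases hnt : ∃ A, ee = .nt A
  · obtain ⟨A, rfl⟩ := hnt
    obtain ⟨hd, hsub, henv⟩ := h
    cases hd with
    | nt hp hd =>
      exact .of_prod hp <| hbase ⟨hd, hsub.trans (.nt hp (.refl _)), henv⟩ (Γ.no_nt_prod _ hp)
  · exact hbase h fun A hA => hnt ⟨A, hA⟩

theorem exists_callAXc {ea₁ ea₂ : ExpE} {t₁ t₂ t₀ : Exp} {ρ ρ₀ : Env} {x : String} {v₂ : Val}
    (h₁ : Simulates Γ P ea₁ (t₁, ρ) (.clos x t₀ ρ₀)) (h₂ : Simulates Γ P ea₂ (t₂, ρ) v₂)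
    (hsub : SubE Γ P (.app ea₁ ea₂)) :
    ∃ ee₀ G, CallAXc Γ P (.app ea₁ ea₂) ee₀ G ∧
      Safe G (weight (.app t₁ t₂, ρ)) (weight (t₀, ρ₀.update x v₂)) ∧
      Tracks Γ P ee₀ (t₀, ρ₀.update x v₂) := by
  obtain ⟨vh₁, G₁, hax₁, htr₁, hs₁, htg₁⟩ := h₁
  obtain ⟨vh₂, G₂, hax₂, htr₂, hs₂, -⟩ := h₂
  cases htr₁ with
  | clos hd₀ hsub₀ henv₀ =>
    exact ⟨_, _, .call hax₁ hax₂, safe_call hd₀ hs₁ htg₁ hs₂,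
      hd₀, hsub₀.trans (.lam (.refl _)), TracedEnv.update henv₀ (.mk hsub hax₁ hax₂ htr₂)⟩

theorem simulates_of_evalE {s : State} {w : Val} (hev : EvalE s w) :
    ∀ {ee}, Tracks Γ P ee s → Simulates Γ P ee s w := by
  induction hev with
  | value x e ρ =>
    refine fun h => h.simulates_of_not_nt fun ⟨hd, hsub, henv⟩ hne => ?_
    cases hd with
    | nt => exact absurd rfl (hne _)
    | lam hd₀ =>
      exact ⟨_, _, .value x _, .clos hd₀ hsub henv, safe_idEqS fun _ => le_rfl,
        varTargetsIn_idEqS _⟩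
  | @var ρ x v hx =>
    refine fun h => h.simulates_of_not_nt fun ⟨hd, _, henv⟩ hne => ?_
    cases hd with
    | nt => exact absurd rfl (hne _)
    | var =>
      have hbind : TracedBinding Γ P x (ρ x) := henv x (by simp [Exp.fv])
      rw [hx] at hbind
      obtain ⟨hsub, hax₁, hax₂, htr⟩ := hbind
      exact ⟨_, _, .var hsub hax₁ hax₂, htr, safe_varGraphS hx _, varTargetsIn_varGraphS x _⟩
  | apply _ _ _ ih₁ ih₂ ih₃ =>
    refine fun h => h.simulates_of_not_nt fun h hne => ?_
    cases h.deriv with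
    | nt => exact absurd rfl (hne _)
    | app =>
      obtain ⟨h₁, h₂⟩ := h.app
      obtain ⟨ee₀, G, hcall, hs, h₀⟩ := exists_callAXc (ih₁ h₁) (ih₂ h₂) h.sub
      obtain ⟨vh, G₃, hax₃, htr₃, hs₃, htg₃⟩ := ih₃ h₀
      exact ⟨vh, _, .resultC hcall hax₃, htr₃, hs.comp hs₃, htg₃.comp⟩

def Diverges (s : State) : Prop := ¬∃ v, EvalE s v

theorem exists_call_of_diverges_app {ea₁ ea₂ : ExpE} {t₁ t₂ : Exp} {ρ : Env}
    (h : Tracks Γ P (.app ea₁ ea₂) (.app t₁ t₂, ρ)) (hdiv : Diverges (.app t₁ t₂, ρ)) :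
    ∃ ee' s' G, CallAXAny Γ P (.app ea₁ ea₂) ee' G ∧
      Safe G (weight (.app t₁ t₂, ρ)) (weight s') ∧ Tracks Γ P ee' s' ∧ Diverges s' := by
  obtain ⟨h₁, h₂⟩ := h.app
  by_cases hdiv₁ : Diverges (t₁, ρ)
  · exact ⟨_, _, _, .inl (.oper ea₁ ea₂),
      safe_idDecS (weight_app_left_le t₁ t₂ ρ) (stateWeight_app_left_lt t₁ t₂ ρ), h₁, hdiv₁⟩
  by_cases hdiv₂ : Diverges (t₂, ρ)
  · exact ⟨_, _, _, .inr (.inl (.opnd ea₁ ea₂)),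
      safe_idDecS (weight_app_right_le t₁ t₂ ρ) (stateWeight_app_right_lt t₁ t₂ ρ), h₂, hdiv₂⟩
  obtain ⟨⟨x, t₀, ρ₀⟩, hev₁⟩ := not_not.1 hdiv₁
  obtain ⟨v₂, hev₂⟩ := not_not.1 hdiv₂
  obtain ⟨ee₀, G, hcall, hs, h₀⟩ :=
    exists_callAXc (simulates_of_evalE hev₁ h₁) (simulates_of_evalE hev₂ h₂) h.sub
  exact ⟨ee₀, _, G, .inr (.inr (.inl hcall)), hs, h₀,
    fun ⟨v, hev⟩ => hdiv ⟨v, .apply hev₁ hev₂ hev⟩⟩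

theorem exists_call_of_diverges {ee : ExpE} {s : State} (h : Tracks Γ P ee s)
    (hdiv : Diverges s) :
    ∃ ee' s' G, CallAXAny Γ P ee ee' G ∧ Safe G (weight s) (weight s') ∧
      Tracks Γ P ee' s' ∧ Diverges s' := by
  obtain ⟨t, ρ⟩ := s
  obtain ⟨hd, hsub, henv⟩ := h
  cases hd with
  | var x =>
    have hbind : TracedBinding Γ P x (ρ x) := henv x (by simp [Exp.fv])
    cases hx : ρ x with
    | none => rw [hx] at hbind; cases hbind
    | some v => exact absurd ⟨v, .var hx⟩ hdiv
  | lam => exact absurd ⟨_, .value _ _ _⟩ hdiv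
  | app hd₁ hd₂ => exact exists_call_of_diverges_app ⟨.app hd₁ hd₂, hsub, henv⟩ hdiv
  | nt hp hd =>
    exact ⟨_, _, _, .inr (.inr (.inr (.gram hp))), safe_idEqS fun _ => le_rfl,
      ⟨hd, hsub.trans (.nt hp (.refl _)), henv⟩, hdiv⟩

end GammaTermination

open GammaTermination

/-- Γ-termination theorem: if every infinite call sequence
`P = e₀ → e₁, G₁ → e₂, G₂ → …` in the approximate extended semantics for `P`
carries a thread of infinite descent in its multipath, then `P` is
Γ-terminating: every pure instance `Q` of `P` (obtained by replacing each
nonterminal occurrence of `P` by a pure λ-expression it derives, i.e.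
`P ⇒*_Γ Q`) terminates under call-by-value evaluation. -/
theorem gamma_termination (Γ : Grammar) (P : ExpE) (hP : fvE Γ P = ∅)
    (h : ∀ (f : ℕ → ExpE) (g : ℕ → ArcSet), f 0 = P →
      (∀ n, CallAXAny Γ P (f n) (f (n + 1)) (g n)) →
      ∃ (j : ℕ) (a : ℕ → NP) (r : ℕ → Lab),
        (∀ k, j ≤ k → (a k, r k, a (k + 1)) ∈ g k) ∧
        (∀ N, ∃ k, N ≤ k ∧ j ≤ k ∧ r k = Lab.dec)) :
    ∀ Q : Exp, Deriv Γ P Q → ∃ v, EvalE (Q, Env.empty) v := by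
  intro Q hQ
  by_contra hdiv
  let X := {q : ExpE × State // Tracks Γ P q.1 q.2 ∧ Diverges q.2}
  have hstart : Tracks Γ P P (Q, Env.empty) :=
    ⟨hQ, .refl P, fun y hy => absurd (show y ∈ fvE Γ P from ⟨Q, hQ, hy⟩) (by simp [hP])⟩
  have hstep : ∀ q : X, ∃ q' : X, ∃ G, CallAXAny Γ P q.1.1 q'.1.1 G ∧
      Safe G (weight q.1.2) (weight q'.1.2) := fun ⟨_, hT, hdiv⟩ =>
    let ⟨ee', s', G, hcall, hs, hT', hdiv'⟩ := exists_call_of_diverges hT hdiv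
    ⟨⟨(ee', s'), hT', hdiv'⟩, G, hcall, hs⟩
  choose next G hcall hsafe using hstep
  let F : ℕ → X := fun n => Nat.rec ⟨(P, (Q, Env.empty)), hstart, hdiv⟩ (fun _ => next) n
  obtain ⟨j, a, r, harc, hinf⟩ :=
    h (fun n => (F n).1.1) (fun n => G (F n)) rfl (fun n => hcall (F n))
  exact not_infinite_descent_of_safe (fun k => hsafe (F k)) harc hinf
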